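/- Let ε > 0, σ > 0, and let u : [0, T] → ℓ² be a continuously differentiable solution of the conservative DNLS equation i u̇_n + (1/ε)(u_{n−1} − 2u_n + u_{n+1}) + |u_n|^{2σ}u_n = 0 (n ∈ ℤ) with u(0) = u₀. Then for all t ∈ [0, T], ‖u(t)‖²_{ℓ²₁} ≤ ‖u₀‖²_{ℓ²₁} + (2ε/(σ+1))‖u₀‖^{2σ+2}_{ℓ²}. -/

import Mathlib

/-!
The DNLS flow conserves the mass `‖u‖²` and the Hamiltonian
`H(u) = ‖Bu‖² - ε/(σ+1) ∑ₙ |uₙ|^(2σ+2)`. Both follow from the equation in the form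
`Δu = -ε (i u̇ + |u|^(2σ) u)` and the summation by parts `⟪Δx, y⟫ = -⟪Bx, By⟫`: `Re ⟪u, u̇⟫ = 0`
because `⟪u, Δu⟫` and `⟪u, |u|^(2σ) u⟫` are real, and `Re ⟪Bu, Bu̇⟫ = ε Re ⟪|u|^(2σ) u, u̇⟫`, which
is `ε/(2σ+2)` times the derivative of the power sum. The power sum `v ↦ ∑ₙ |vₙ|^(q+2)` is Fréchet
differentiable on `ℓ²` thanks to the pointwise second-order bound for `z ↦ |z|^(q+2)`. Hence
`‖Bu(t)‖² ≤ ‖Bu₀‖² + ε/(σ+1) ∑ₙ |uₙ(t)|^(2σ+2) ≤ ‖Bu₀‖² + ε/(σ+1) ‖u₀‖^(2σ+2)`.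
-/

open scoped InnerProductSpace lp
open Asymptotics Metric Set

theorem eq_of_hasDerivAt_eq_zero_Icc {E : Type*} [NormedAddCommGroup E] [NormedSpace ℝ E]
    {f : ℝ → E} {a b : ℝ} (hf : ∀ t ∈ Icc a b, HasDerivAt f 0 t) : ∀ t ∈ Icc a b, f t = f a :=
  constant_of_has_deriv_right_zero (fun t ht => (hf t ht).continuousAt.continuousWithinAt)
    fun t ht => (hf t (Ico_subset_Icc_self ht)).hasDerivWithinAt

theorem Real.rpow_sub_rpow_mul_le {q a b : ℝ} (hq : 0 ≤ q) (ha : 0 ≤ a) (hb : 0 ≤ b) :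
    (a ^ q - b ^ q) * b ≤ q * a ^ q * (a - b) := by
  have hq1 : 0 < q + 1 := by linarith
  -- weighted AM-GM for `a ^ (q + 1)` and `b ^ (q + 1)` with weights `q / (q + 1)`, `1 / (q + 1)`
  have amgm := Real.geom_mean_le_arith_mean2_weighted (div_nonneg hq hq1.le)
    (one_div_nonneg.2 hq1.le) (Real.rpow_nonneg ha (q + 1)) (Real.rpow_nonneg hb (q + 1))
    (by field_simp)
  rw [← Real.rpow_mul ha, ← Real.rpow_mul hb, mul_div_cancel₀ _ hq1.ne',
    mul_one_div_cancel hq1.ne', Real.rpow_one, Real.rpow_add_one' ha hq1.ne',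
    Real.rpow_add_one' hb hq1.ne'] at amgm
  have hsum : (q + 1) * (q / (q + 1) * (a ^ q * a) + 1 / (q + 1) * (b ^ q * b))
      = q * (a ^ q * a) + b ^ q * b := by
    field_simp
  nlinarith [mul_le_mul_of_nonneg_left amgm hq1.le]

theorem norm_rpow_smul_sub_rpow_smul_le {F : Type*} [NormedAddCommGroup F] [NormedSpace ℝ F]
    {q M : ℝ} (hq : 0 ≤ q) {x y : F} (hx : ‖x‖ ≤ M) (hy : ‖y‖ ≤ M) :
    ‖‖x‖ ^ q • x - ‖y‖ ^ q • y‖ ≤ (q + 1) * M ^ q * ‖x - y‖ := by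
  wlog hyx : ‖y‖ ≤ ‖x‖ generalizing x y
  · rw [norm_sub_rev, norm_sub_rev x]
    exact this hy hx (le_of_not_ge hyx)
  have hxq : ‖x‖ ^ q ≤ M ^ q := Real.rpow_le_rpow (norm_nonneg x) hx hq
  have hyq : ‖y‖ ^ q ≤ ‖x‖ ^ q := Real.rpow_le_rpow (norm_nonneg y) hyx hq
  calc ‖‖x‖ ^ q • x - ‖y‖ ^ q • y‖
      = ‖‖x‖ ^ q • (x - y) + (‖x‖ ^ q - ‖y‖ ^ q) • y‖ := by
        rw [smul_sub, sub_smul]; abel_nf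
    _ ≤ ‖x‖ ^ q * ‖x - y‖ + (‖x‖ ^ q - ‖y‖ ^ q) * ‖y‖ := by
        refine (norm_add_le _ _).trans_eq ?_
        rw [norm_smul, norm_smul, Real.norm_of_nonneg (by positivity),
          Real.norm_of_nonneg (sub_nonneg.2 hyq)]
    _ ≤ ‖x‖ ^ q * ‖x - y‖ + q * ‖x‖ ^ q * ‖x - y‖ := by
        have hxy : q * ‖x‖ ^ q * (‖x‖ - ‖y‖) ≤ q * ‖x‖ ^ q * ‖x - y‖ := by
          gcongr; exact norm_sub_norm_le x y
        linarith [Real.rpow_sub_rpow_mul_le hq (norm_nonneg x) (norm_nonneg y)]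
    _ = (q + 1) * ‖x‖ ^ q * ‖x - y‖ := by ring
    _ ≤ (q + 1) * M ^ q * ‖x - y‖ := by gcongr

theorem abs_norm_rpow_add_sub_sub_le {F : Type*} [NormedAddCommGroup F] [InnerProductSpace ℝ F]
    {q : ℝ} (hq : 0 ≤ q) (a h : F) :
    |‖a + h‖ ^ (q + 2) - ‖a‖ ^ (q + 2) - (q + 2) * ‖a‖ ^ q * ⟪a, h⟫_ℝ|
      ≤ (q + 2) * (q + 1) * (‖a‖ + ‖h‖) ^ q * ‖h‖ ^ 2 := by
  let f' : F → F →L[ℝ] ℝ := fun z => innerSL ℝ (((q + 2) * ‖z‖ ^ q) • z)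
  have hf' : ∀ z, HasFDerivAt (fun z : F => ‖z‖ ^ (q + 2)) (f' z) z := fun z => by
    simpa [f', smul_smul, add_sub_cancel_right] using
      hasFDerivAt_norm_rpow z (p := q + 2) (by linarith)
  have bound : ∀ z ∈ closedBall a ‖h‖,
      ‖f' z - f' a‖ ≤ (q + 2) * (q + 1) * (‖a‖ + ‖h‖) ^ q * ‖h‖ := by
    intro z hz
    rw [mem_closedBall, dist_eq_norm] at hz
    have hzM : ‖z‖ ≤ ‖a‖ + ‖h‖ := by
      simpa using (norm_le_norm_add_norm_sub' z a).trans (by linarith)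
    calc ‖f' z - f' a‖ = (q + 2) * ‖‖z‖ ^ q • z - ‖a‖ ^ q • a‖ := by
          simp only [f', ← map_sub, innerSL_apply_norm, ← smul_smul, ← smul_sub, norm_smul,
            Real.norm_of_nonneg (by linarith : 0 ≤ q + 2)]
      _ ≤ (q + 2) * ((q + 1) * (‖a‖ + ‖h‖) ^ q * ‖h‖) := by
          gcongr
          exact (norm_rpow_smul_sub_rpow_smul_le hq hzM (by simp)).trans (by gcongr)
      _ = _ := by ring
  have key := Convex.norm_image_sub_le_of_norm_hasFDerivWithin_le'
    (fun z _ => (hf' z).hasFDerivWithinAt) bound (convex_closedBall a ‖h‖)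
    (mem_closedBall_self (norm_nonneg h)) (by simp : a + h ∈ closedBall a ‖h‖)
  simp only [add_sub_cancel_left, f', innerSL_apply_apply, real_inner_smul_left,
    Real.norm_eq_abs] at key
  convert key using 1
  ring

theorem Real.rpow_add_two {x q : ℝ} (hx : 0 ≤ x) (hq : q + 2 ≠ 0) :
    x ^ (q + 2) = x ^ q * x ^ 2 := by
  simpa using Real.rpow_add_natCast' hx (y := q) (n := 2) (by simpa using hq)

namespace lp

section NormSq

variable {ι : Type*} {E : ι → Type*} [∀ i, NormedAddCommGroup (E i)]

theorem summable_norm_sq (x : lp E 2) : Summable fun i => ‖x i‖ ^ 2 := by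
  simpa using (lp.memℓp x).summable (p := 2) (by norm_num)

theorem norm_sq_eq_tsum (x : lp E 2) : ‖x‖ ^ 2 = ∑' i, ‖x i‖ ^ 2 := by
  simpa using lp.norm_rpow_eq_tsum (p := 2) (by norm_num) x

end NormSq

section PowerSum

variable {ι F : Type*} [NormedAddCommGroup F] {q : ℝ}

theorem norm_apply_rpow_le (hq : 0 ≤ q) (v : ℓ²(ι, F)) (i : ι) : ‖v i‖ ^ q ≤ ‖v‖ ^ q :=
  Real.rpow_le_rpow (norm_nonneg _) (lp.norm_apply_le_norm two_ne_zero v i) hq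

theorem norm_apply_rpow_add_two_le (hq : 0 ≤ q) (v : ℓ²(ι, F)) (i : ι) :
    ‖v i‖ ^ (q + 2) ≤ ‖v‖ ^ q * ‖v i‖ ^ 2 := by
  rw [Real.rpow_add_two (norm_nonneg _) (by positivity)]
  exact mul_le_mul_of_nonneg_right (norm_apply_rpow_le hq v i) (by positivity)

theorem summable_norm_rpow_add_two (hq : 0 ≤ q) (v : ℓ²(ι, F)) :
    Summable fun i => ‖v i‖ ^ (q + 2) :=
  .of_nonneg_of_le (fun _ => by positivity) (norm_apply_rpow_add_two_le hq v)
    ((summable_norm_sq v).mul_left _)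

noncomputable def sumNormRpow (p : ℝ) (v : ℓ²(ι, F)) : ℝ := ∑' i, ‖v i‖ ^ p

theorem sumNormRpow_nonneg (p : ℝ) (v : ℓ²(ι, F)) : 0 ≤ sumNormRpow p v :=
  tsum_nonneg fun _ => by positivity

theorem sumNormRpow_add_two_le (hq : 0 ≤ q) (v : ℓ²(ι, F)) :
    sumNormRpow (q + 2) v ≤ ‖v‖ ^ (q + 2) := by
  calc sumNormRpow (q + 2) v ≤ ∑' i, ‖v‖ ^ q * ‖v i‖ ^ 2 :=
        (summable_norm_rpow_add_two hq v).tsum_le_tsum (norm_apply_rpow_add_two_le hq v)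
          ((summable_norm_sq v).mul_left _)
    _ = ‖v‖ ^ (q + 2) := by
        rw [tsum_mul_left, ← norm_sq_eq_tsum, Real.rpow_add_two (norm_nonneg _) (by positivity)]

theorem memℓp_norm_rpow_smul [NormedSpace ℝ F] (hq : 0 ≤ q) (v : ℓ²(ι, F)) :
    Memℓp (fun i => ‖v i‖ ^ q • v i) 2 :=
  ((memℓp_norm_iff.2 (lp.memℓp v)).const_mul (‖v‖ ^ q)).mono fun i => by
    rw [norm_smul, Real.norm_of_nonneg (by positivity)]
    exact mul_le_mul_of_nonneg_right (norm_apply_rpow_le hq v i) (norm_nonneg _)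

noncomputable def normRpowSMul [NormedSpace ℝ F] (hq : 0 ≤ q) (v : ℓ²(ι, F)) : ℓ²(ι, F) :=
  ⟨_, memℓp_norm_rpow_smul hq v⟩

@[simp]
theorem normRpowSMul_apply [NormedSpace ℝ F] (hq : 0 ≤ q) (v : ℓ²(ι, F)) (i : ι) :
    normRpowSMul hq v i = ‖v i‖ ^ q • v i := rfl

theorem abs_sumNormRpow_add_sub_sub_le [InnerProductSpace ℝ F] (hq : 0 ≤ q) (v h : ℓ²(ι, F)) :
    |sumNormRpow (q + 2) (v + h) - sumNormRpow (q + 2) v - (q + 2) * ⟪normRpowSMul hq v, h⟫_ℝ|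
      ≤ (q + 2) * (q + 1) * (‖v‖ + ‖h‖) ^ q * ‖h‖ ^ 2 := by
  have hsum := (((summable_norm_rpow_add_two hq (v + h)).hasSum.sub
    (summable_norm_rpow_add_two hq v).hasSum).sub
    ((lp.summable_inner (normRpowSMul hq v) h).hasSum.mul_left (q + 2)))
  rw [← lp.inner_eq_tsum] at hsum
  rw [norm_sq_eq_tsum h]
  refine hsum.norm_le_of_bounded ((summable_norm_sq h).hasSum.mul_left _) fun i => ?_
  have hK : (q + 2) * (q + 1) * (‖v i‖ + ‖h i‖) ^ q * ‖h i‖ ^ 2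
      ≤ (q + 2) * (q + 1) * (‖v‖ + ‖h‖) ^ q * ‖h i‖ ^ 2 := by
    gcongr <;> exact lp.norm_apply_le_norm two_ne_zero (E := fun _ : ι => F) _ i
  simpa [real_inner_smul_left, ← mul_assoc]
    using (abs_norm_rpow_add_sub_sub_le hq (v i) (h i)).trans hK

theorem hasFDerivAt_sumNormRpow_add_two [InnerProductSpace ℝ F] (hq : 0 ≤ q) (v : ℓ²(ι, F)) :
    HasFDerivAt (sumNormRpow (q + 2)) ((q + 2) • innerSL ℝ (normRpowSMul hq v)) v := by
  rw [hasFDerivAt_iff_isLittleO_nhds_zero]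
  refine IsBigO.trans_isLittleO (g := fun h => ‖h‖ ^ 2) ?_ (isLittleO_norm_pow_id one_lt_two)
  refine .of_bound ((q + 2) * (q + 1) * (‖v‖ + 1) ^ q) ?_
  filter_upwards [closedBall_mem_nhds (0 : ℓ²(ι, F)) one_pos] with h hh
  rw [mem_closedBall_zero_iff] at hh
  simpa using (abs_sumNormRpow_add_sub_sub_le hq v h).trans (by gcongr)

end PowerSum

section Lattice

variable (𝕜 : Type*) {ι ι' E : Type*} [NormedField 𝕜] [NormedAddCommGroup E] [NormedSpace 𝕜 E]

theorem memℓp_comp_equiv (e : ι ≃ ι') (x : ℓ²(ι', E)) : Memℓp (x ∘ e) 2 :=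
  memℓp_gen <| by
    simpa [Function.comp_def] using
      (e.summable_iff (f := fun i => ‖x i‖ ^ 2)).2 (summable_norm_sq x)

noncomputable def reindex (e : ι ≃ ι') : ℓ²(ι', E) ≃ₗᵢ[𝕜] ℓ²(ι, E) where
  toFun x := ⟨x ∘ e, memℓp_comp_equiv e x⟩
  invFun x := ⟨x ∘ e.symm, memℓp_comp_equiv e.symm x⟩
  map_add' _ _ := rfl
  map_smul' _ _ := rfl
  left_inv x := by ext; simp
  right_inv x := by ext; simp
  norm_map' x := by
    refine (sq_eq_sq₀ (norm_nonneg _) (norm_nonneg _)).1 ?_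
    rw [norm_sq_eq_tsum, norm_sq_eq_tsum]
    exact e.tsum_eq (fun i => ‖x i‖ ^ 2)

@[simp]
theorem reindex_apply (e : ι ≃ ι') (x : ℓ²(ι', E)) (i : ι) : reindex 𝕜 e x i = x (e i) := rfl

@[simp]
theorem reindex_symm_apply (e : ι ≃ ι') (x : ℓ²(ι, E)) (i : ι') :
    (reindex 𝕜 e).symm x i = x (e.symm i) := rfl

noncomputable def shift : ℓ²(ℤ, E) ≃ₗᵢ[𝕜] ℓ²(ℤ, E) := reindex 𝕜 (Equiv.addRight 1)

/-- The difference operator `B` of the DNLS literature. -/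
noncomputable def forwardDiff : ℓ²(ℤ, E) →L[𝕜] ℓ²(ℤ, E) :=
  (shift 𝕜 (E := E)).toLinearIsometry.toContinuousLinearMap - .id 𝕜 _

noncomputable def discreteLaplacian : ℓ²(ℤ, E) →L[𝕜] ℓ²(ℤ, E) :=
  (shift 𝕜 (E := E)).toLinearIsometry.toContinuousLinearMap
    + (shift 𝕜 (E := E)).symm.toLinearIsometry.toContinuousLinearMap - 2 • .id 𝕜 _

variable {𝕜}

@[simp]
theorem forwardDiff_apply (x : ℓ²(ℤ, E)) (n : ℤ) : forwardDiff 𝕜 x n = x (n + 1) - x n := by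
  simp [forwardDiff, shift]

@[simp]
theorem discreteLaplacian_apply (x : ℓ²(ℤ, E)) (n : ℤ) :
    discreteLaplacian 𝕜 x n = x (n + 1) + x (n - 1) - 2 • x n := by
  simp [discreteLaplacian, shift, sub_eq_add_neg]

theorem norm_forwardDiff_sq (x : ℓ²(ℤ, E)) :
    ‖forwardDiff 𝕜 x‖ ^ 2 = ∑' n, ‖x (n + 1) - x n‖ ^ 2 := by
  simp [norm_sq_eq_tsum]

end Lattice

theorem inner_discreteLaplacian_left {𝕜 E : Type*} [RCLike 𝕜] [NormedAddCommGroup E]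
    [InnerProductSpace 𝕜 E] (x y : ℓ²(ℤ, E)) :
    ⟪discreteLaplacian 𝕜 x, y⟫_𝕜 = -⟪forwardDiff 𝕜 x, forwardDiff 𝕜 y⟫_𝕜 := by
  simp only [discreteLaplacian, forwardDiff, sub_apply, add_apply, ContinuousLinearMap.id_apply,
    LinearIsometry.coe_toContinuousLinearMap, LinearIsometryEquiv.coe_toLinearIsometry, two_smul,
    inner_sub_left, inner_sub_right, inner_add_left, LinearIsometryEquiv.inner_map_eq_flip,
    LinearIsometryEquiv.symm_symm, LinearIsometryEquiv.symm_apply_apply]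
  ring

section Complex

variable {ι : Type*}

theorem real_inner_eq_re_inner (x y : ℓ²(ι, ℂ)) : ⟪x, y⟫_ℝ = (⟪x, y⟫_ℂ).re := by
  rw [lp.inner_eq_tsum, lp.inner_eq_tsum, Complex.re_tsum (lp.summable_inner x y)]
  simp [mul_comm]

theorem im_inner_normRpowSMul {q : ℝ} (hq : 0 ≤ q) (v : ℓ²(ι, ℂ)) :
    (⟪v, normRpowSMul hq v⟫_ℂ).im = 0 := by
  rw [← Complex.conj_eq_iff_im, inner_conj_symm, lp.inner_eq_tsum, lp.inner_eq_tsum]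
  exact tsum_congr fun i => by simp [Complex.real_smul]; ring

end Complex

end lp

namespace DNLS

open Complex lp

section DNLSIdentities

variable {ε q : ℝ} {v v' : ℓ²(ℤ, ℂ)}

theorem discreteLaplacian_eq (hε : ε ≠ 0) (hq : 0 ≤ q)
    (h : ∀ n : ℤ, I * v' n + (1 / ε : ℂ) * (v (n - 1) - 2 * v n + v (n + 1))
      + (‖v n‖ ^ q : ℝ) * v n = 0) :
    discreteLaplacian ℂ v = (-ε : ℂ) • (I • v' + normRpowSMul hq v) := by
  ext n
  simp only [discreteLaplacian_apply, lp.coeFn_smul, lp.coeFn_add, Pi.smul_apply, Pi.add_apply,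
    normRpowSMul_apply, smul_eq_mul, nsmul_eq_mul, Complex.real_smul]
  have hn := h n
  field_simp [ofReal_ne_zero.2 hε] at hn
  linear_combination hn

variable (hq : 0 ≤ q) (hΔ : discreteLaplacian ℂ v = (-ε : ℂ) • (I • v' + normRpowSMul hq v))
include hΔ

theorem real_inner_eq_zero (hε : ε ≠ 0) : ⟪v, v'⟫_ℝ = 0 := by
  have hIv' : I • v' = -((ε⁻¹ : ℂ) • discreteLaplacian ℂ v + normRpowSMul hq v) := by
    rw [hΔ, smul_smul, mul_neg, inv_mul_cancel₀ (ofReal_ne_zero.2 hε), neg_smul, one_smul]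
    abel
  have hB : ⟪v, discreteLaplacian ℂ v⟫_ℂ = -((‖forwardDiff ℂ v‖ ^ 2 : ℝ) : ℂ) := by
    rw [← inner_conj_symm, inner_discreteLaplacian_left, inner_self_eq_norm_sq_to_K]
    simp
  have key : I * ⟪v, v'⟫_ℂ
      = -((ε⁻¹ : ℂ) * ⟪v, discreteLaplacian ℂ v⟫_ℂ + ⟪v, normRpowSMul hq v⟫_ℂ) := by
    rw [← inner_smul_right, hIv', inner_neg_right, inner_add_right, inner_smul_right]
  simpa [lp.real_inner_eq_re_inner, hB, im_inner_normRpowSMul, sq] using congrArg im key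

theorem real_inner_forwardDiff_eq :
    ⟪forwardDiff ℂ v, forwardDiff ℂ v'⟫_ℝ = ε * ⟪normRpowSMul hq v, v'⟫_ℝ := by
  rw [lp.real_inner_eq_re_inner, lp.real_inner_eq_re_inner, ← neg_neg ⟪forwardDiff ℂ v, _⟫_ℂ,
    ← inner_discreteLaplacian_left, hΔ, inner_smul_left, inner_add_left, inner_smul_left,
    inner_self_eq_norm_sq_to_K]
  simp [sq]

end DNLSIdentities

noncomputable def energy (ε q : ℝ) (v : ℓ²(ℤ, ℂ)) : ℝ :=
  ‖forwardDiff ℂ v‖ ^ 2 - 2 * ε / (q + 2) * sumNormRpow (q + 2) v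

variable {ε q : ℝ} {u : ℝ → ℓ²(ℤ, ℂ)} {u' : ℓ²(ℤ, ℂ)} {t : ℝ}

theorem hasDerivAt_norm_sq (hε : ε ≠ 0) (hq : 0 ≤ q) (hu : HasDerivAt u u' t)
    (hΔ : discreteLaplacian ℂ (u t) = (-ε : ℂ) • (I • u' + normRpowSMul hq (u t))) :
    HasDerivAt (fun s => ‖u s‖ ^ 2) 0 t := by
  simpa [real_inner_eq_zero hq hΔ hε] using hu.norm_sq

theorem hasDerivAt_energy (hq : 0 ≤ q) (hu : HasDerivAt u u' t)
    (hΔ : discreteLaplacian ℂ (u t) = (-ε : ℂ) • (I • u' + normRpowSMul hq (u t))) :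
    HasDerivAt (fun s => energy ε q (u s)) 0 t := by
  have hB : HasDerivAt (fun s => forwardDiff ℂ (u s)) (forwardDiff ℂ u') t :=
    ((forwardDiff ℂ).restrictScalars ℝ).hasFDerivAt.comp_hasDerivAt t hu
  have hP := (hasFDerivAt_sumNormRpow_add_two hq (u t)).comp_hasDerivAt t hu
  refine (hB.norm_sq.sub (hP.const_mul (2 * ε / (q + 2)))).congr_deriv ?_
  rw [real_inner_forwardDiff_eq hq hΔ]
  simp only [smul_apply, coe_innerSL_apply, smul_eq_mul]
  field_simp
  ring

end DNLS

open lp DNLS in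
theorem stmt_7_general (ε σ T : ℝ) (hε : 0 < ε) (hσ : 0 < σ)
    (u u' : ℝ → lp (fun _ : ℤ => ℂ) 2)
    (hu : ∀ t ∈ Set.Icc (0:ℝ) T, HasDerivAt u (u' t) t)
    (heq : ∀ t ∈ Set.Icc (0:ℝ) T, ∀ n : ℤ,
      Complex.I * u' t n + (1/ε : ℂ) * (u t (n-1) - 2 * u t n + u t (n+1))
        + (‖u t n‖ ^ (2 * σ) : ℝ) * u t n = 0)
    (u₀ : lp (fun _ : ℤ => ℂ) 2) (hu0 : u 0 = u₀) :
    ∀ t ∈ Set.Icc (0:ℝ) T,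
      (∑' n : ℤ, ‖u t (n+1) - u t n‖ ^ 2)
          + (∑' n : ℤ, ‖u t n‖ ^ 2)
        ≤ ((∑' n : ℤ, ‖u₀ (n+1) - u₀ n‖ ^ 2)
            + (∑' n : ℤ, ‖u₀ n‖ ^ 2))
          + (2 * ε / (σ + 1)) * ‖u₀‖ ^ (2 * σ + 2) := by
  intro t ht
  subst hu0
  have hq : 0 ≤ 2 * σ := by positivity
  have hΔ s (hs : s ∈ Icc 0 T) := discreteLaplacian_eq hε.ne' hq (heq s hs)
  have hmass : ‖u t‖ = ‖u 0‖ := (sq_eq_sq₀ (norm_nonneg _) (norm_nonneg _)).1 <|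
    eq_of_hasDerivAt_eq_zero_Icc (fun s hs => hasDerivAt_norm_sq hε.ne' hq (hu s hs) (hΔ s hs)) t ht
  have henergy : energy ε (2 * σ) (u t) = energy ε (2 * σ) (u 0) :=
    eq_of_hasDerivAt_eq_zero_Icc (fun s hs => hasDerivAt_energy hq (hu s hs) (hΔ s hs)) t ht
  rw [← norm_forwardDiff_sq (𝕜 := ℂ), ← norm_forwardDiff_sq (𝕜 := ℂ), ← norm_sq_eq_tsum,
    ← norm_sq_eq_tsum, hmass]
  have hc : 0 ≤ ε / (σ + 1) := by positivity
  have hPt := mul_le_mul_of_nonneg_left (sumNormRpow_add_two_le hq (u t)) hc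
  have hP0 := mul_nonneg hc (sumNormRpow_nonneg (2 * σ + 2) (u 0))
  have hM := mul_nonneg hc (Real.rpow_nonneg (norm_nonneg (u 0)) (2 * σ + 2))
  rw [hmass] at hPt
  rw [energy, energy, show 2 * ε / (2 * σ + 2) = ε / (σ + 1) by field_simp] at henergy
  linarith [show 2 * ε / (σ + 1) * ‖u 0‖ ^ (2 * σ + 2) = 2 * (ε / (σ + 1) * ‖u 0‖ ^ (2 * σ + 2))
    by ring]

/-- For solutions of the conservative DNLS,
`‖u(t)‖²_{ℓ²₁} ≤ ‖u₀‖²_{ℓ²₁} + (2ε/(σ+1)) ‖u₀‖^(2σ+2)_{ℓ²}`, where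
`‖u‖²_{ℓ²₁} = Σₙ |uₙ₊₁ − uₙ|² + Σₙ |uₙ|²`. -/
theorem stmt_7 (ε σ T : ℝ) (hε : 0 < ε) (hσ : 0 < σ) (hT : 0 ≤ T)
    (u u' : ℝ → lp (fun _ : ℤ => ℂ) 2)
    (hu : ∀ t ∈ Set.Icc (0:ℝ) T, HasDerivAt u (u' t) t)
    (hu' : ContinuousOn u' (Set.Icc (0:ℝ) T))
    (heq : ∀ t ∈ Set.Icc (0:ℝ) T, ∀ n : ℤ,
      Complex.I * u' t n + (1/ε : ℂ) * (u t (n-1) - 2 * u t n + u t (n+1))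
        + (‖u t n‖ ^ (2 * σ) : ℝ) * u t n = 0)
    (u₀ : lp (fun _ : ℤ => ℂ) 2) (hu0 : u 0 = u₀) :
    ∀ t ∈ Set.Icc (0:ℝ) T,
      (∑' n : ℤ, ‖u t (n+1) - u t n‖ ^ 2)
          + (∑' n : ℤ, ‖u t n‖ ^ 2)
        ≤ ((∑' n : ℤ, ‖u₀ (n+1) - u₀ n‖ ^ 2)
            + (∑' n : ℤ, ‖u₀ n‖ ^ 2))
          + (2 * ε / (σ + 1)) * ‖u₀‖ ^ (2 * σ + 2) :=
  stmt_7_general ε σ T hε hσ u u' hu heq u₀ hu0
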